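/- Let H ≥ 1, d_x, d_u ≥ 1, W > 0, R_𝓜 > 0, α ≥ 0, let c : ℝ^{d_x} × ℝ^{d_u} → ℝ be 1-Lipschitz, let Ψ ∈ ℝ^{d_x × (H d_u + (H−1) d_x)} with ‖Ψ‖_F ≥ 1, let V be a positive definite matrix of size H d_u + (H−1) d_x with V ⪰ 2 W² R_𝓜² H² · I, and let Σ ∈ ℝ^{d_x × d_x} be positive semidefinite with ‖Σ‖ ≤ W². Fix vectors w_{t−2H}, …, w_{t−1} ∈ ℝ^{d_x} with ‖w_r‖ ≤ W, and for M ∈ ℝ^{d_u × H d_x} define u_t(M) = Σ_{h=1}^{H} M^{[h]} w_{t−h}, x_t(M; Ψ) = Ψ · P(M) · (w_{t−2H}, …, w_{t−2}) + w_{t−1}, and f̄(M) = c(x_t(M;Ψ), u_t(M)) − α ‖V^{−1/2} P(M) (I_{2H−1} ⊗ Σ)^{1/2}‖_∞, where I_{2H−1} ⊗ Σ is the block-diagonal matrix with 2H−1 diagonal blocks equal to Σ. Then for all M, M' ∈ ℝ^{d_u × H d_x}: |f̄(M) − f̄(M')| ≤ (√2 · W H ‖Ψ‖_F + α / (R_𝓜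 √(2H))) · ‖M − M'‖_F. -/

import Mathlib

open scoped BigOperators

noncomputable section

/-- Row index type of the block matrix `P(M)`. -/
abbrev PRowIdx (H dx du : ℕ) := (Fin H × Fin du) ⊕ (Fin (H - 1) × Fin dx)

/-- Column index type of the block matrix `P(M)`. -/
abbrev PColIdx (H dx : ℕ) := Fin (2 * H - 1) × Fin dx

/-- The block matrix `P(M)` built from the blocks `M^{[1]},…,M^{[H]}` (here `M h`
denotes the block `M^{[h]}` for `1 ≤ h ≤ H`). -/
def Pmat (H dx du : ℕ) (M : ℕ → Matrix (Fin du) (Fin dx) ℝ) :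
    Matrix (PRowIdx H dx du) (PColIdx H dx) ℝ :=
  fun r c =>
    match r with
    | Sum.inl (j, i) =>
        if (j : ℕ) ≤ (c.1 : ℕ) ∧ (c.1 : ℕ) ≤ (j : ℕ) + (H - 1) then
          M (H - ((c.1 : ℕ) - (j : ℕ))) i c.2
        else 0
    | Sum.inr (j, i) => if (c.1 : ℕ) = H + (j : ℕ) ∧ i = c.2 then 1 else 0

/-- The Kronecker product `I_{2H−1} ⊗ Σ`: block-diagonal with `2H−1` copies of `Σ`. -/
def kronIdSigma (H dx : ℕ) (Sig : Matrix (Fin dx) (Fin dx) ℝ) :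
    Matrix (PColIdx H dx) (PColIdx H dx) ℝ :=
  fun a b => if a.1 = b.1 then Sig a.2 b.2 else 0

/-- The spectral (ℓ₂ operator) norm of a real matrix. -/
noncomputable def specNorm {m n : Type*} [Fintype m] [Fintype n] [DecidableEq n]
    (A : Matrix m n ℝ) : ℝ :=
  ‖LinearMap.toContinuousLinearMap (Matrix.toEuclideanLin A)‖

/-- The entrywise maximum absolute value of a real matrix. -/
noncomputable def entryMax {m n : Type*} [Fintype m] [Fintype n]
    (A : Matrix m n ℝ) : ℝ :=
  ⨆ i, ⨆ j, |A i j|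


open scoped Matrix

lemma sum_ite_const2 {a b : Type*} [Fintype a] [Fintype b] (P : Prop) [Decidable P]
    (f : a → b → ℝ) :
    ∑ i, ∑ c, (if P then f i c else 0) = if P then ∑ i, ∑ c, f i c else 0 := by
  split <;> simp

lemma quad_single {n : Type*} [Fintype n] [DecidableEq n] (A : Matrix n n ℝ) (i : n) :
    Pi.single (M := fun _ => ℝ) i 1 ⬝ᵥ (A *ᵥ Pi.single (M := fun _ => ℝ) i 1) = A i i := by
  rw [Matrix.mulVec_single, single_dotProduct]
  simp

lemma abs_sub_le_abs_add_abs (a b : ℝ) : |a - b| ≤ |a| + |b| := by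
  rw [sub_eq_add_neg]
  exact (abs_add_le _ _).trans (by rw [abs_neg])

noncomputable def enormE {n : Type*} [Fintype n] (x : n → ℝ) : ℝ := Real.sqrt (∑ i, x i ^ 2)

noncomputable def frobN {m n : Type*} [Fintype m] [Fintype n] (A : Matrix m n ℝ) : ℝ :=
  Real.sqrt (∑ i, ∑ j, A i j ^ 2)

lemma enormE_nonneg {n : Type*} [Fintype n] (x : n → ℝ) : 0 ≤ enormE x := Real.sqrt_nonneg _

lemma enormE_eq_norm {n : Type*} [Fintype n] (x : n → ℝ) :
    enormE x = ‖(WithLp.equiv 2 (n → ℝ)).symm x‖ := by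
  rw [EuclideanSpace.norm_eq, enormE]
  congr 1; apply Finset.sum_congr rfl; intro i _
  rw [Real.norm_eq_abs, sq_abs]; rfl

lemma sq_enormE {n : Type*} [Fintype n] (x : n → ℝ) : enormE x ^ 2 = ∑ i, x i ^ 2 :=
  Real.sq_sqrt (by positivity)

lemma enormE_sum_le {ι n : Type*} [Fintype n] (s : Finset ι) (f : ι → n → ℝ) :
    enormE (∑ k ∈ s, f k) ≤ ∑ k ∈ s, enormE (f k) := by
  simp only [enormE_eq_norm]
  have : (WithLp.equiv 2 (n → ℝ)).symm (∑ k ∈ s, f k)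
      = ∑ k ∈ s, (WithLp.linearEquiv 2 ℝ (n → ℝ)).symm (f k) :=
    map_sum (WithLp.linearEquiv 2 ℝ (n → ℝ)).symm f s
  rw [this]
  exact norm_sum_le _ _

lemma abs_dotProduct_le {n : Type*} [Fintype n] (x y : n → ℝ) :
    |x ⬝ᵥ y| ≤ enormE x * enormE y := by
  have h := Finset.sum_mul_sq_le_sq_mul_sq Finset.univ x y
  have : |x ⬝ᵥ y| = Real.sqrt ((x ⬝ᵥ y) ^ 2) := (Real.sqrt_sq_eq_abs _).symm
  rw [this, enormE, enormE, ← Real.sqrt_mul (by positivity)]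
  exact Real.sqrt_le_sqrt h

lemma enormE_mulVec_le_frob {m n : Type*} [Fintype m] [Fintype n] (A : Matrix m n ℝ) (x : n → ℝ) :
    enormE (A *ᵥ x) ≤ frobN A * enormE x := by
  rw [enormE, frobN, enormE, ← Real.sqrt_mul (by positivity)]
  apply Real.sqrt_le_sqrt
  rw [Finset.sum_mul]
  apply Finset.sum_le_sum
  intro i _
  exact Finset.sum_mul_sq_le_sq_mul_sq Finset.univ (A i) x

lemma abs_apply_le_enormE {n : Type*} [Fintype n] (x : n → ℝ) (i : n) : |x i| ≤ enormE x := by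
  rw [enormE, ← Real.sqrt_sq_eq_abs]
  exact Real.sqrt_le_sqrt (Finset.single_le_sum (f := fun j => x j ^ 2)
    (fun j _ => sq_nonneg _) (Finset.mem_univ i))

lemma enormE_single {n : Type*} [Fintype n] [DecidableEq n] (i : n) :
    enormE (Pi.single (M := fun _ => ℝ) i 1) = 1 := by
  rw [enormE]
  have : (∑ j, Pi.single (M := fun _ => ℝ) i 1 j ^ 2) = 1 := by
    simp [Pi.single_apply, sq, ite_mul, Finset.sum_ite_eq]
  rw [this, Real.sqrt_one]
lemma enormE_mulVec_le_spec {m n : Type*} [Fintype m] [Fintype n] [DecidableEq n]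
    (A : Matrix m n ℝ) (x : n → ℝ) :
    enormE (A *ᵥ x) ≤ specNorm A * enormE x := by
  rw [enormE_eq_norm, enormE_eq_norm]
  have h := (LinearMap.toContinuousLinearMap (Matrix.toEuclideanLin A)).le_opNorm
    ((WithLp.equiv 2 (n → ℝ)).symm x)
  have he : (LinearMap.toContinuousLinearMap (Matrix.toEuclideanLin A))
      ((WithLp.equiv 2 (n → ℝ)).symm x) = (WithLp.equiv 2 (m → ℝ)).symm (A *ᵥ x) := by
    simp [LinearMap.coe_toContinuousLinearMap']
  rw [he] at h
  exact h

-- real PSD quadratic form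
lemma psd_quad {n : Type*} [Fintype n] {A : Matrix n n ℝ} (hA : A.PosSemidef) (x : n → ℝ) :
    0 ≤ x ⬝ᵥ A *ᵥ x := by
  have := hA.dotProduct_mulVec_nonneg x
  simpa using this

lemma abs_entry_le_entryMax {m n : Type*} [Fintype m] [Fintype n]
    (A : Matrix m n ℝ) (i : m) (j : n) : |A i j| ≤ entryMax A := by
  have h1 : |A i j| ≤ ⨆ j', |A i j'| :=
    le_ciSup (f := fun j' => |A i j'|) (Set.Finite.bddAbove (Set.finite_range _)) j
  exact h1.trans (le_ciSup (f := fun i' => ⨆ j', |A i' j'|)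
    (Set.Finite.bddAbove (Set.finite_range _)) i)

lemma entryMax_le {m n : Type*} [Fintype m] [Fintype n] [Nonempty m] [Nonempty n]
    (A : Matrix m n ℝ) (b : ℝ) (hb : ∀ i j, |A i j| ≤ b) : entryMax A ≤ b :=
  ciSup_le fun i => ciSup_le fun j => hb i j

lemma abs_entryMax_sub_le {m n : Type*} [Fintype m] [Fintype n] [Nonempty m] [Nonempty n]
    (A B : Matrix m n ℝ) : |entryMax A - entryMax B| ≤ entryMax (A - B) := by
  rw [abs_sub_le_iff]
  constructor
  · rw [sub_le_iff_le_add]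
    apply entryMax_le
    intro i j
    calc |A i j| ≤ |(A - B) i j| + |B i j| := by
          have : A i j = (A - B) i j + B i j := by simp [Matrix.sub_apply]
          rw [this]; exact abs_add_le _ _
    _ ≤ entryMax (A - B) + entryMax B :=
          add_le_add (abs_entry_le_entryMax _ i j) (abs_entry_le_entryMax _ i j)
  · rw [sub_le_iff_le_add]
    apply entryMax_le
    intro i j
    calc |B i j| ≤ |(A - B) i j| + |A i j| := by
          have h2 : B i j = -((A - B) i j) + A i j := by simp [Matrix.sub_apply]
          rw [h2]; exact (abs_add_le _ _).trans_eq (by rw [abs_neg])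
    _ ≤ entryMax (A - B) + entryMax A :=
          add_le_add (abs_entry_le_entryMax _ i j) (abs_entry_le_entryMax _ i j)

lemma dotProduct_self_nonneg {n : Type*} [Fintype n] (x : n → ℝ) : 0 ≤ x ⬝ᵥ x :=
  Finset.sum_nonneg fun i _ => mul_self_nonneg _

lemma dotProduct_self_eq {n : Type*} [Fintype n] (x : n → ℝ) : x ⬝ᵥ x = ∑ i, x i ^ 2 := by
  simp [dotProduct, sq]

lemma inv_quad_le {n : Type*} [Fintype n] [DecidableEq n] {V : Matrix n n ℝ} (hV : V.PosDef)
    {cc : ℝ} (hcc : 0 < cc)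
    (hlow : (V - cc • (1 : Matrix n n ℝ)).PosSemidef) (x : n → ℝ) :
    x ⬝ᵥ V⁻¹ *ᵥ x ≤ (x ⬝ᵥ x) / cc := by
  set y := V⁻¹ *ᵥ x with hy
  have hVy : V *ᵥ y = x := by
    rw [hy, Matrix.mulVec_mulVec,
      Matrix.mul_nonsing_inv _ (isUnit_iff_ne_zero.mpr hV.det_pos.ne'), Matrix.one_mulVec]
  have hq : cc * (y ⬝ᵥ y) ≤ y ⬝ᵥ V *ᵥ y := by
    have h0 := psd_quad hlow y
    rw [Matrix.sub_mulVec, Matrix.smul_mulVec, Matrix.one_mulVec, dotProduct_sub,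
      dotProduct_smul] at h0
    simpa [smul_eq_mul] using sub_nonneg.mp h0
  have hxy : x ⬝ᵥ V⁻¹ *ᵥ x = x ⬝ᵥ y := rfl
  have hyx : y ⬝ᵥ V *ᵥ y = x ⬝ᵥ y := by
    rw [hVy, dotProduct_comm]
  set q := x ⬝ᵥ y with hqdef
  rw [hyx] at hq
  set nx := x ⬝ᵥ x
  set ny := y ⬝ᵥ y
  have hny : 0 ≤ ny := dotProduct_self_nonneg y
  have hnx : 0 ≤ nx := dotProduct_self_nonneg x
  have hq0 : 0 ≤ q := le_trans (by positivity) hq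
  have hcs : q ^ 2 ≤ nx * ny := by
    have h1 : |q| ≤ enormE x * enormE y := abs_dotProduct_le x y
    have h2 : q ^ 2 ≤ (enormE x * enormE y) ^ 2 := by
      rw [← sq_abs]
      exact pow_le_pow_left₀ (abs_nonneg _) h1 2
    calc q ^ 2 ≤ (enormE x * enormE y) ^ 2 := h2
    _ = nx * ny := by
        rw [mul_pow, sq_enormE, sq_enormE, show nx = ∑ i, x i ^ 2 from dotProduct_self_eq x,
          show ny = ∑ i, y i ^ 2 from dotProduct_self_eq y]
  rcases eq_or_lt_of_le hq0 with h | h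
  · rw [← h]; positivity
  · have hny' : 0 < ny := by nlinarith [hcs, mul_pos h h, hnx]
    rw [le_div_iff₀ hcc]
    nlinarith [mul_le_mul_of_nonneg_left hq h.le, hcs, hny']

lemma window_sum_le {H : ℕ} (hH : 1 ≤ H) (j : Fin H) (f : ℕ → ℝ) (hf : ∀ h, 0 ≤ f h) :
    ∑ k : Fin (2*H-1), (if (j:ℕ) ≤ (k:ℕ) ∧ (k:ℕ) ≤ (j:ℕ) + (H-1)
        then f (H - ((k:ℕ) - (j:ℕ))) else 0)
      ≤ ∑ h ∈ Finset.Icc 1 H, f h := by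
  classical
  rw [← Finset.sum_filter]
  set s := Finset.univ.filter
    (fun k : Fin (2*H-1) => (j:ℕ) ≤ (k:ℕ) ∧ (k:ℕ) ≤ (j:ℕ) + (H-1)) with hs
  have hinj : ∀ a ∈ s, ∀ b ∈ s,
      H - ((a : Fin (2*H-1)) - (j:ℕ) : ℕ) = H - ((b:ℕ) - (j:ℕ)) → a = b := by
    intro a ha b hb hab
    rw [hs, Finset.mem_filter] at ha hb
    have : (a:ℕ) = (b:ℕ) := by omega
    exact Fin.ext this
  have him := Finset.sum_image (f := f) (g := fun k : Fin (2*H-1) => H - ((k:ℕ) - (j:ℕ))) hinj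
  rw [← him]
  apply Finset.sum_le_sum_of_subset_of_nonneg
  · intro m hm
    rw [Finset.mem_image] at hm
    obtain ⟨k, hk, rfl⟩ := hm
    rw [hs, Finset.mem_filter] at hk
    rw [Finset.mem_Icc]
    omega
  · intro m _ _; exact hf m

set_option maxHeartbeats 1000000 in
/-- Lipschitz continuity in `M` of the optimistic surrogate loss
`f̄(M) = c(x_t(M;Ψ), u_t(M)) − α ‖V^{−1/2} P(M) (I_{2H−1} ⊗ Σ)^{1/2}‖_∞`, where
`u_t(M) = ∑_h M^{[h]} w_{t−h}` and `x_t(M;Ψ) = Ψ P(M) (w_{t−2H},…,w_{t−2}) + w_{t−1}`: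
`|f̄(M) − f̄(M')| ≤ (√2 W H ‖Ψ‖_F + α/(R_𝓜 √(2H))) ‖M − M'‖_F`. -/
theorem surrogate_loss_lipschitz (H dx du : ℕ) (hH : 1 ≤ H) (hdx : 1 ≤ dx) (hdu : 1 ≤ du)
    (W RM α : ℝ) (hW : 0 < W) (hRM : 0 < RM) (hα : 0 ≤ α)
    (c : (Fin dx → ℝ) → (Fin du → ℝ) → ℝ)
    (hc : ∀ x u x' u', |c x u - c x' u'| ≤
      Real.sqrt ((∑ i, (x i - x' i) ^ 2) + ∑ j, (u j - u' j) ^ 2))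
    (Ψ : Matrix (Fin dx) (PRowIdx H dx du) ℝ)
    (hΨ : 1 ≤ Real.sqrt (∑ i, ∑ j, (Ψ i j) ^ 2))
    (V : Matrix (PRowIdx H dx du) (PRowIdx H dx du) ℝ) (hV : V.PosDef)
    (hVlower : (V - (2 * W ^ 2 * RM ^ 2 * (H : ℝ) ^ 2) •
      (1 : Matrix (PRowIdx H dx du) (PRowIdx H dx du) ℝ)).PosSemidef)
    (Sig : Matrix (Fin dx) (Fin dx) ℝ) (hSig : Sig.PosSemidef) (hSigW : specNorm Sig ≤ W ^ 2)
    (Ssqrt : Matrix (PColIdx H dx) (PColIdx H dx) ℝ)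
    (hSsqrtPSD : Ssqrt.PosSemidef) (hSsqrt : Ssqrt * Ssqrt = kronIdSigma H dx Sig)
    (Vinvsqrt : Matrix (PRowIdx H dx du) (PRowIdx H dx du) ℝ)
    (hVinvsqrtPSD : Vinvsqrt.PosSemidef) (hVinvsqrt : Vinvsqrt * Vinvsqrt = V⁻¹)
    (t : ℤ) (w : ℤ → Fin dx → ℝ)
    (hw : ∀ r ∈ Finset.Icc (t - 2 * H) (t - 1), Real.sqrt (∑ i, (w r i) ^ 2) ≤ W) :
    ∀ M M' : ℕ → Matrix (Fin du) (Fin dx) ℝ,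
      |(c ((Ψ * Pmat H dx du M).mulVec
              (fun kc : PColIdx H dx => w (t - 2 * H + (kc.1 : ℕ)) kc.2) + w (t - 1))
            (∑ h ∈ Finset.Icc 1 H, (M h).mulVec (w (t - h))) -
          α * entryMax (Vinvsqrt * Pmat H dx du M * Ssqrt)) -
        (c ((Ψ * Pmat H dx du M').mulVec
              (fun kc : PColIdx H dx => w (t - 2 * H + (kc.1 : ℕ)) kc.2) + w (t - 1))
            (∑ h ∈ Finset.Icc 1 H, (M' h).mulVec (w (t - h))) -
          α * entryMax (Vinvsqrt * Pmat H dx du M' * Ssqrt))| ≤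
      (Real.sqrt 2 * W * H * Real.sqrt (∑ i, ∑ j, (Ψ i j) ^ 2) +
          α / (RM * Real.sqrt (2 * H))) *
        Real.sqrt (∑ h ∈ Finset.Icc 1 H, ∑ i, ∑ j, (M h i j - M' h i j) ^ 2) := by
  
  intro M M'
  classical
  haveI hne1 : Nonempty (PRowIdx H dx du) := ⟨Sum.inl (⟨0, hH⟩, ⟨0, hdu⟩)⟩
  haveI hne2 : Nonempty (PColIdx H dx) := ⟨(⟨0, by omega⟩, ⟨0, hdx⟩)⟩
  have hHpos : (0:ℝ) < (H:ℝ) := by exact_mod_cast hH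
  set F : ℝ := Real.sqrt (∑ i, ∑ j, (Ψ i j) ^ 2) with hFdef
  have hF1 : 1 ≤ F := hΨ
  set v : PColIdx H dx → ℝ := fun kc => w (t - 2 * H + (kc.1 : ℕ)) kc.2 with hv
  set Δ : Matrix (PRowIdx H dx du) (PColIdx H dx) ℝ :=
    Pmat H dx du M - Pmat H dx du M' with hΔdef
  set S : ℝ := ∑ h ∈ Finset.Icc 1 H, ∑ i, ∑ j, (M h i j - M' h i j) ^ 2 with hSdef
  have hS0 : 0 ≤ S := Finset.sum_nonneg fun h _ => Finset.sum_nonneg fun i _ =>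
    Finset.sum_nonneg fun j _ => sq_nonneg _
  have hwv : ∀ k : Fin (2*H-1), enormE (w (t - 2*H + (k:ℕ))) ≤ W := by
    intro k
    apply hw
    rw [Finset.mem_Icc]
    have hk := k.isLt
    omega
  have hwu : ∀ h ∈ Finset.Icc 1 H, enormE (w (t - h)) ≤ W := by
    intro h hh
    rw [Finset.mem_Icc] at hh
    apply hw
    rw [Finset.mem_Icc]
    omega
  set T : ℝ := ∑ h ∈ Finset.Icc 1 H,
    Real.sqrt (∑ i, ∑ j, (M h i j - M' h i j) ^ 2) with hTdef
  have hT0 : 0 ≤ T := Finset.sum_nonneg fun h _ => Real.sqrt_nonneg _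
  have hTsq : T ^ 2 ≤ H * S := by
    have h1 := sq_sum_le_card_mul_sum_sq
      (s := Finset.Icc 1 H) (f := fun h => Real.sqrt (∑ i, ∑ j, (M h i j - M' h i j) ^ 2))
    have h2 : ∀ h ∈ Finset.Icc 1 H,
        (Real.sqrt (∑ i, ∑ j, (M h i j - M' h i j) ^ 2)) ^ 2
          = ∑ i, ∑ j, (M h i j - M' h i j) ^ 2 := fun h _ => Real.sq_sqrt (by positivity)
    rw [Finset.sum_congr rfl h2] at h1
    have h3 : ((Finset.Icc 1 H).card : ℝ) = (H : ℝ) := by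
      rw [Nat.card_Icc]; norm_num
    rw [h3] at h1
    exact h1
  have hTle : T ≤ Real.sqrt ((H:ℝ) * S) := by
    rw [← Real.sqrt_sq hT0]
    exact Real.sqrt_le_sqrt hTsq
  -- Δ entries
  have hΔinl : ∀ (j : Fin H) (i : Fin du) (kc : PColIdx H dx),
      Δ (Sum.inl (j, i)) kc = if (j:ℕ) ≤ (kc.1:ℕ) ∧ (kc.1:ℕ) ≤ (j:ℕ) + (H-1)
        then M (H - ((kc.1:ℕ) - (j:ℕ))) i kc.2 - M' (H - ((kc.1:ℕ) - (j:ℕ))) i kc.2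
        else 0 := by
    intro j i kc
    rw [hΔdef]
    simp only [Matrix.sub_apply, Pmat]
    split <;> simp
  have hΔinr : ∀ (p : Fin (H-1) × Fin dx) (kc : PColIdx H dx), Δ (Sum.inr p) kc = 0 := by
    intro p kc
    obtain ⟨pj, pi⟩ := p
    rw [hΔdef]
    simp [Matrix.sub_apply, Pmat]
  -- Frobenius bound for Δ
  have hfrobΔsq : ∑ r, ∑ kc, Δ r kc ^ 2 ≤ (H:ℝ) * S := by
    rw [Fintype.sum_sum_type]
    have hz : ∑ p : Fin (H-1) × Fin dx, ∑ kc, Δ (Sum.inr p) kc ^ 2 = 0 := by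
      apply Finset.sum_eq_zero; intro p _
      apply Finset.sum_eq_zero; intro kc _
      rw [hΔinr]; simp
    rw [hz, add_zero, Fintype.sum_prod_type]
    have hji : ∀ j : Fin H, ∑ i : Fin du, ∑ kc : PColIdx H dx, Δ (Sum.inl (j,i)) kc ^ 2 ≤ S := by
      intro j
      have e1 : ∀ (i : Fin du) (kc : PColIdx H dx), Δ (Sum.inl (j,i)) kc ^ 2
          = if (j:ℕ) ≤ (kc.1:ℕ) ∧ (kc.1:ℕ) ≤ (j:ℕ) + (H-1)
            then (M (H - ((kc.1:ℕ) - (j:ℕ))) i kc.2 - M' (H - ((kc.1:ℕ) - (j:ℕ))) i kc.2) ^ 2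
            else 0 := by
        intro i kc; rw [hΔinl]; split <;> simp
      simp only [e1]
      have e2 : ∑ i : Fin du, ∑ kc : PColIdx H dx,
          (if (j:ℕ) ≤ (kc.1:ℕ) ∧ (kc.1:ℕ) ≤ (j:ℕ) + (H-1)
            then (M (H - ((kc.1:ℕ) - (j:ℕ))) i kc.2 - M' (H - ((kc.1:ℕ) - (j:ℕ))) i kc.2) ^ 2
            else 0)
          = ∑ k : Fin (2*H-1), (if (j:ℕ) ≤ (k:ℕ) ∧ (k:ℕ) ≤ (j:ℕ) + (H-1)
            then ∑ i : Fin du, ∑ c2 : Fin dx,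
              (M (H - ((k:ℕ) - (j:ℕ))) i c2 - M' (H - ((k:ℕ) - (j:ℕ))) i c2) ^ 2
            else 0) := by
        simp only [Fintype.sum_prod_type]
        rw [Finset.sum_comm]
        apply Finset.sum_congr rfl
        intro k _
        exact sum_ite_const2 _ _
      rw [e2, hSdef]
      exact window_sum_le hH j
        (fun h => ∑ i : Fin du, ∑ c2 : Fin dx, (M h i c2 - M' h i c2) ^ 2)
        (fun h => by positivity)
    calc ∑ j : Fin H, ∑ i : Fin du, ∑ kc : PColIdx H dx, Δ (Sum.inl (j,i)) kc ^ 2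
        ≤ ∑ _j : Fin H, S := Finset.sum_le_sum fun j _ => hji j
    _ = (H:ℝ) * S := by
        rw [Finset.sum_const, Finset.card_univ, Fintype.card_fin, nsmul_eq_mul]
  have hfrobΔ : frobN Δ ≤ Real.sqrt ((H:ℝ) * S) := Real.sqrt_le_sqrt hfrobΔsq
  -- Δ *ᵥ v
  have hrowinr : ∀ p : Fin (H-1) × Fin dx, (Δ *ᵥ v) (Sum.inr p) = 0 := by
    intro p
    show (fun kc => Δ (Sum.inr p) kc) ⬝ᵥ v = 0
    apply Finset.sum_eq_zero
    intro kc _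
    simp [hΔinr]
  have hrow : ∀ j : Fin H, enormE (fun i : Fin du => (Δ *ᵥ v) (Sum.inl (j, i))) ≤ W * T := by
    intro j
    have e1 : (fun i : Fin du => (Δ *ᵥ v) (Sum.inl (j, i)))
        = ∑ k : Fin (2*H-1), fun i : Fin du =>
            (if (j:ℕ) ≤ (k:ℕ) ∧ (k:ℕ) ≤ (j:ℕ) + (H-1)
              then ((M (H - ((k:ℕ)-(j:ℕ))) - M' (H - ((k:ℕ)-(j:ℕ)))) *ᵥ
                (w (t - 2*H + (k:ℕ)))) i
              else 0) := by
      funext i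
      rw [Finset.sum_apply]
      show (fun kc => Δ (Sum.inl (j,i)) kc) ⬝ᵥ v = _
      rw [dotProduct, Fintype.sum_prod_type]
      apply Finset.sum_congr rfl
      intro k _
      by_cases hP : (j:ℕ) ≤ (k:ℕ) ∧ (k:ℕ) ≤ (j:ℕ) + (H-1)
      · simp only [hP, if_true]
        show _ = ((M (H - ((k:ℕ)-(j:ℕ))) - M' (H - ((k:ℕ)-(j:ℕ)))) *ᵥ
            (w (t - 2*H + (k:ℕ)))) i
        show _ = (fun c2 => (M (H - ((k:ℕ)-(j:ℕ))) - M' (H - ((k:ℕ)-(j:ℕ)))) i c2) ⬝ᵥ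
            (w (t - 2*H + (k:ℕ)))
        rw [dotProduct]
        apply Finset.sum_congr rfl
        intro c2 _
        rw [hΔinl]
        simp [hP, Matrix.sub_apply, hv]
      · simp only [hP, if_false]
        apply Finset.sum_eq_zero
        intro c2 _
        rw [hΔinl]
        simp [hP]
    rw [e1]
    refine (enormE_sum_le _ _).trans ?_
    have hb : ∀ k : Fin (2*H-1), enormE (fun i : Fin du =>
          (if (j:ℕ) ≤ (k:ℕ) ∧ (k:ℕ) ≤ (j:ℕ) + (H-1)
            then ((M (H - ((k:ℕ)-(j:ℕ))) - M' (H - ((k:ℕ)-(j:ℕ)))) *ᵥ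
              (w (t - 2*H + (k:ℕ)))) i
            else 0))
        ≤ (if (j:ℕ) ≤ (k:ℕ) ∧ (k:ℕ) ≤ (j:ℕ) + (H-1)
            then (Real.sqrt (∑ i, ∑ c2, (M (H - ((k:ℕ)-(j:ℕ))) i c2
              - M' (H - ((k:ℕ)-(j:ℕ))) i c2) ^ 2)) * W
            else 0) := by
      intro k
      by_cases hP : (j:ℕ) ≤ (k:ℕ) ∧ (k:ℕ) ≤ (j:ℕ) + (H-1)
      · simp only [hP, if_true]
        refine (enormE_mulVec_le_frob _ _).trans ?_
        have hfr : frobN (M (H - ((k:ℕ)-(j:ℕ))) - M' (H - ((k:ℕ)-(j:ℕ))))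
            = Real.sqrt (∑ i, ∑ c2, (M (H - ((k:ℕ)-(j:ℕ))) i c2
              - M' (H - ((k:ℕ)-(j:ℕ))) i c2) ^ 2) := by
          rw [frobN]
          simp [Matrix.sub_apply]
        rw [hfr]
        exact mul_le_mul_of_nonneg_left (hwv k) (Real.sqrt_nonneg _)
      · simp only [hP, if_false]
        simp [enormE]
    refine (Finset.sum_le_sum (fun k _ => hb k)).trans ?_
    refine (window_sum_le hH j (fun h => (Real.sqrt (∑ i, ∑ c2, (M h i c2 - M' h i c2) ^ 2)) * W)
      (fun h => by positivity)).trans ?_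
    rw [hTdef, Finset.mul_sum]
    apply le_of_eq
    apply Finset.sum_congr rfl
    intro h _
    ring
  have hDv : enormE (Δ *ᵥ v) ≤ W * (H:ℝ) * Real.sqrt S := by
    have hsum : ∑ r, ((Δ *ᵥ v) r) ^ 2 ≤ (W * (H:ℝ)) ^ 2 * S := by
      rw [Fintype.sum_sum_type]
      have hz : ∑ p : Fin (H-1) × Fin dx, ((Δ *ᵥ v) (Sum.inr p)) ^ 2 = 0 := by
        apply Finset.sum_eq_zero; intro p _; rw [hrowinr]; simp
      rw [hz, add_zero, Fintype.sum_prod_type]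
      have hj : ∀ j : Fin H, ∑ i : Fin du, ((Δ *ᵥ v) (Sum.inl (j,i))) ^ 2
          ≤ W ^ 2 * ((H:ℝ) * S) := by
        intro j
        have h1 : ∑ i : Fin du, ((Δ *ᵥ v) (Sum.inl (j,i))) ^ 2
            = enormE (fun i : Fin du => (Δ *ᵥ v) (Sum.inl (j, i))) ^ 2 := (sq_enormE _).symm
        rw [h1]
        calc enormE (fun i : Fin du => (Δ *ᵥ v) (Sum.inl (j, i))) ^ 2
            ≤ (W * T) ^ 2 := by
              apply pow_le_pow_left₀ (enormE_nonneg _) (hrow j)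
        _ = W ^ 2 * T ^ 2 := by ring
        _ ≤ W ^ 2 * ((H:ℝ) * S) := by nlinarith [hTsq, sq_nonneg W]
      calc ∑ j : Fin H, ∑ i : Fin du, ((Δ *ᵥ v) (Sum.inl (j,i))) ^ 2
          ≤ ∑ _j : Fin H, W ^ 2 * ((H:ℝ) * S) := Finset.sum_le_sum fun j _ => hj j
      _ = (H:ℝ) * (W ^ 2 * ((H:ℝ) * S)) := by
          rw [Finset.sum_const, Finset.card_univ, Fintype.card_fin, nsmul_eq_mul]
      _ = (W * (H:ℝ)) ^ 2 * S := by ring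
    have h2 : enormE (Δ *ᵥ v) ≤ Real.sqrt ((W * (H:ℝ)) ^ 2 * S) := Real.sqrt_le_sqrt hsum
    calc enormE (Δ *ᵥ v) ≤ Real.sqrt ((W * (H:ℝ)) ^ 2 * S) := h2
    _ = W * (H:ℝ) * Real.sqrt S := by
        rw [Real.sqrt_mul (sq_nonneg _), Real.sqrt_sq (by positivity)]
  -- c-term bound
  have hcterm : |c ((Ψ * Pmat H dx du M) *ᵥ v + w (t - 1))
        (∑ h ∈ Finset.Icc 1 H, (M h) *ᵥ (w (t - h)))
      - c ((Ψ * Pmat H dx du M') *ᵥ v + w (t - 1))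
        (∑ h ∈ Finset.Icc 1 H, (M' h) *ᵥ (w (t - h)))|
      ≤ Real.sqrt 2 * W * (H:ℝ) * F * Real.sqrt S := by
    refine (hc _ _ _ _).trans ?_
    have hxdiff : ∀ i, ((Ψ * Pmat H dx du M) *ᵥ v + w (t - 1)) i
        - ((Ψ * Pmat H dx du M') *ᵥ v + w (t - 1)) i = (Ψ *ᵥ (Δ *ᵥ v)) i := by
      intro i
      rw [Matrix.mulVec_mulVec, hΔdef, Matrix.mul_sub, Matrix.sub_mulVec]
      simp
    have hudiff : ∀ jj, (∑ h ∈ Finset.Icc 1 H, (M h) *ᵥ (w (t - h))) jj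
        - (∑ h ∈ Finset.Icc 1 H, (M' h) *ᵥ (w (t - h))) jj
        = (∑ h ∈ Finset.Icc 1 H, ((M h - M' h) *ᵥ (w (t - h)))) jj := by
      intro jj
      simp only [Finset.sum_apply, Matrix.sub_mulVec, Pi.sub_apply]
      rw [← Finset.sum_sub_distrib]
    have hxnorm : enormE (Ψ *ᵥ (Δ *ᵥ v)) ≤ F * (W * (H:ℝ) * Real.sqrt S) := by
      refine (enormE_mulVec_le_frob _ _).trans ?_
      exact mul_le_mul_of_nonneg_left hDv (Real.sqrt_nonneg _)
    have hunorm : enormE (∑ h ∈ Finset.Icc 1 H, ((M h - M' h) *ᵥ (w (t - h)))) ≤ W * T := by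
      refine (enormE_sum_le _ _).trans ?_
      have hb : ∀ h ∈ Finset.Icc 1 H, enormE ((M h - M' h) *ᵥ (w (t - h)))
          ≤ (Real.sqrt (∑ i, ∑ c2, (M h i c2 - M' h i c2) ^ 2)) * W := by
        intro h hh
        refine (enormE_mulVec_le_frob _ _).trans ?_
        have hfr : frobN (M h - M' h)
            = Real.sqrt (∑ i, ∑ c2, (M h i c2 - M' h i c2) ^ 2) := by
          rw [frobN]; simp [Matrix.sub_apply]
        rw [hfr]
        exact mul_le_mul_of_nonneg_left (hwu h hh) (Real.sqrt_nonneg _)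
      refine (Finset.sum_le_sum hb).trans ?_
      rw [hTdef, Finset.mul_sum]
      apply le_of_eq
      apply Finset.sum_congr rfl
      intro h _
      ring
    have hsx : ∑ i, (((Ψ * Pmat H dx du M) *ᵥ v + w (t - 1)) i
        - ((Ψ * Pmat H dx du M') *ᵥ v + w (t - 1)) i) ^ 2
        ≤ (F * (W * (H:ℝ) * Real.sqrt S)) ^ 2 := by
      have e0 : ∑ i, (((Ψ * Pmat H dx du M) *ᵥ v + w (t - 1)) i
          - ((Ψ * Pmat H dx du M') *ᵥ v + w (t - 1)) i) ^ 2
          = ∑ i, ((Ψ *ᵥ (Δ *ᵥ v)) i) ^ 2 := by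
        apply Finset.sum_congr rfl; intro i _; rw [hxdiff]
      rw [e0, ← sq_enormE]
      exact pow_le_pow_left₀ (enormE_nonneg _) hxnorm 2
    have hsu : ∑ jj, ((∑ h ∈ Finset.Icc 1 H, (M h) *ᵥ (w (t - h))) jj
        - (∑ h ∈ Finset.Icc 1 H, (M' h) *ᵥ (w (t - h))) jj) ^ 2 ≤ (W * T) ^ 2 := by
      have e0 : ∑ jj, ((∑ h ∈ Finset.Icc 1 H, (M h) *ᵥ (w (t - h))) jj
          - (∑ h ∈ Finset.Icc 1 H, (M' h) *ᵥ (w (t - h))) jj) ^ 2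
          = ∑ jj, ((∑ h ∈ Finset.Icc 1 H, ((M h - M' h) *ᵥ (w (t - h)))) jj) ^ 2 := by
        apply Finset.sum_congr rfl; intro jj _; rw [hudiff]
      rw [e0, ← sq_enormE]
      exact pow_le_pow_left₀ (enormE_nonneg _) hunorm 2
    refine (Real.sqrt_le_sqrt (add_le_add hsx hsu)).trans ?_
    have hfin : (F * (W * (H:ℝ) * Real.sqrt S)) ^ 2 + (W * T) ^ 2
        ≤ (Real.sqrt 2 * W * (H:ℝ) * F) ^ 2 * S := by
      have hsqS : Real.sqrt S ^ 2 = S := Real.sq_sqrt hS0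
      have hsq2 : Real.sqrt 2 ^ 2 = 2 := Real.sq_sqrt (by norm_num)
      have hH1 : (1:ℝ) ≤ (H:ℝ) := by exact_mod_cast hH
      have hF2 : 1 ≤ F ^ 2 := by nlinarith [hF1]
      have e1 : (F * (W * (H:ℝ) * Real.sqrt S)) ^ 2 = F^2 * W^2 * (H:ℝ)^2 * S := by
        linear_combination (F^2 * W^2 * (H:ℝ)^2) * hsqS
      have e2 : (Real.sqrt 2 * W * (H:ℝ) * F) ^ 2 * S = 2 * W^2 * (H:ℝ)^2 * F^2 * S := by
        linear_combination (W^2 * (H:ℝ)^2 * F^2 * S) * hsq2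
      rw [e1, e2]
      have hWT2 : (W * T) ^ 2 ≤ W^2 * ((H:ℝ) * S) := by
        nlinarith [hTsq, sq_nonneg W]
      have k1 : (H:ℝ) ≤ (H:ℝ)^2 := by nlinarith [hH1]
      have k2 : W^2 * ((H:ℝ) * S) ≤ W^2 * ((H:ℝ)^2 * S) := by
        nlinarith [mul_nonneg (sq_nonneg W) (mul_nonneg (sub_nonneg.mpr k1) hS0)]
      have k3 : W^2 * ((H:ℝ)^2 * S) ≤ F^2 * W^2 * (H:ℝ)^2 * S := by
        nlinarith [mul_nonneg (sub_nonneg.mpr hF2)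
          (mul_nonneg (sq_nonneg W) (mul_nonneg (sq_nonneg (H:ℝ)) hS0))]
      linarith [hWT2, k2, k3]
    refine (Real.sqrt_le_sqrt hfin).trans ?_
    rw [Real.sqrt_mul (sq_nonneg _), Real.sqrt_sq (by positivity)]
  -- α-term bound
  set cc : ℝ := 2 * W ^ 2 * RM ^ 2 * (H:ℝ) ^ 2 with hccdef
  have hccpos : 0 < cc := by positivity
  have hVdiag : ∀ i : PRowIdx H dx du, ∑ k, Vinvsqrt i k ^ 2 ≤ 1 / cc := by
    intro i
    have hsym : ∀ a b, Vinvsqrt a b = Vinvsqrt b a := by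
      intro a b
      have h := hVinvsqrtPSD.1
      conv_lhs => rw [← h]
      simp [Matrix.conjTranspose_apply]
    have h1 : ∑ k, Vinvsqrt i k ^ 2 = (Vinvsqrt * Vinvsqrt) i i := by
      rw [Matrix.mul_apply]
      apply Finset.sum_congr rfl
      intro k _
      rw [sq]
      congr 1
      exact hsym i k
    rw [h1, hVinvsqrt]
    have h2 := inv_quad_le hV hccpos hVlower (Pi.single (M := fun _ => ℝ) i 1)
    rw [quad_single] at h2
    have h3 : Pi.single (M := fun _ => ℝ) i 1 ⬝ᵥ Pi.single (M := fun _ => ℝ) i 1 = 1 := by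
      rw [single_dotProduct]
      simp
    rw [h3] at h2
    exact h2
  have hSigdiag : ∀ a : Fin dx, Sig a a ≤ W ^ 2 := by
    intro a
    have h1 : Sig a a = (Sig *ᵥ Pi.single (M := fun _ => ℝ) a 1) a := by
      rw [Matrix.mulVec_single]; simp
    have h2 : |(Sig *ᵥ Pi.single (M := fun _ => ℝ) a 1) a|
        ≤ enormE (Sig *ᵥ Pi.single (M := fun _ => ℝ) a 1) := abs_apply_le_enormE _ _
    have h3 := enormE_mulVec_le_spec Sig (Pi.single (M := fun _ => ℝ) a 1)
    rw [enormE_single] at h3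
    calc Sig a a ≤ |Sig a a| := le_abs_self _
    _ = |(Sig *ᵥ Pi.single (M := fun _ => ℝ) a 1) a| := by rw [← h1]
    _ ≤ specNorm Sig * 1 := h2.trans h3
    _ ≤ W ^ 2 := by rw [mul_one]; exact hSigW
  have hScol : ∀ jc : PColIdx H dx, enormE (fun l => Ssqrt l jc) ≤ W := by
    intro jc
    have hsymS : ∀ a b, Ssqrt a b = Ssqrt b a := by
      intro a b
      have h := hSsqrtPSD.1
      conv_lhs => rw [← h]
      simp [Matrix.conjTranspose_apply]
    have h1 : ∑ l, Ssqrt l jc ^ 2 = (Ssqrt * Ssqrt) jc jc := by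
      rw [Matrix.mul_apply]
      apply Finset.sum_congr rfl
      intro l _
      rw [sq]
      congr 1
      exact hsymS l jc
    have h2 : (Ssqrt * Ssqrt) jc jc = Sig jc.2 jc.2 := by
      rw [hSsqrt, kronIdSigma]
      simp
    rw [enormE, h1, h2]
    calc Real.sqrt (Sig jc.2 jc.2) ≤ Real.sqrt (W ^ 2) := Real.sqrt_le_sqrt (hSigdiag _)
    _ = W := Real.sqrt_sq hW.le
  have hentry : ∀ (i : PRowIdx H dx du) (jc : PColIdx H dx),
      |(Vinvsqrt * Δ * Ssqrt) i jc| ≤ Real.sqrt (1/cc) * (Real.sqrt ((H:ℝ) * S) * W) := by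
    intro i jc
    have e1 : (Vinvsqrt * Δ * Ssqrt) i jc
        = (fun k => Vinvsqrt i k) ⬝ᵥ (Δ *ᵥ (fun l => Ssqrt l jc)) := by
      rw [Matrix.mul_assoc, Matrix.mul_apply]
      apply Finset.sum_congr rfl
      intro k _
      congr 1
    rw [e1]
    refine (abs_dotProduct_le _ _).trans ?_
    have hb1 : enormE (fun k => Vinvsqrt i k) ≤ Real.sqrt (1/cc) :=
      Real.sqrt_le_sqrt (hVdiag i)
    have hb2 : enormE (Δ *ᵥ (fun l => Ssqrt l jc)) ≤ Real.sqrt ((H:ℝ) * S) * W := by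
      refine (enormE_mulVec_le_frob _ _).trans ?_
      exact mul_le_mul hfrobΔ (hScol jc) (enormE_nonneg _) (Real.sqrt_nonneg _)
    exact mul_le_mul hb1 hb2 (enormE_nonneg _) (Real.sqrt_nonneg _)
  have harith : Real.sqrt (1/cc) * (Real.sqrt ((H:ℝ) * S) * W)
      = Real.sqrt S / (RM * Real.sqrt (2 * (H:ℝ))) := by
    have hccsq : Real.sqrt cc = Real.sqrt 2 * W * RM * (H:ℝ) := by
      have hsq2 : Real.sqrt 2 ^ 2 = 2 := Real.sq_sqrt (by norm_num)
      have e : cc = (Real.sqrt 2 * W * RM * (H:ℝ)) ^ 2 := by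
        rw [hccdef]; linear_combination (-(W^2 * RM^2 * (H:ℝ)^2)) * hsq2
      rw [e]; exact Real.sqrt_sq (by positivity)
    have hs2 : Real.sqrt 2 ≠ 0 := by positivity
    have hsH : Real.sqrt (H:ℝ) ≠ 0 := by positivity
    have hHH : Real.sqrt (H:ℝ) * Real.sqrt (H:ℝ) = (H:ℝ) := Real.mul_self_sqrt hHpos.le
    rw [one_div, Real.sqrt_inv, hccsq, Real.sqrt_mul hHpos.le S,
      Real.sqrt_mul (by norm_num : (0:ℝ) ≤ 2) (H:ℝ)]
    field_simp
    linear_combination (Real.sqrt S) * hHH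
  have halpha : |entryMax (Vinvsqrt * Pmat H dx du M * Ssqrt)
        - entryMax (Vinvsqrt * Pmat H dx du M' * Ssqrt)|
      ≤ Real.sqrt S / (RM * Real.sqrt (2 * (H:ℝ))) := by
    have hABsub : Vinvsqrt * Pmat H dx du M * Ssqrt - Vinvsqrt * Pmat H dx du M' * Ssqrt
        = Vinvsqrt * Δ * Ssqrt := by
      rw [hΔdef, Matrix.mul_sub, Matrix.sub_mul]
    refine (abs_entryMax_sub_le _ _).trans ?_
    rw [hABsub]
    refine (entryMax_le _ _ (fun i jc => hentry i jc)).trans ?_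
    rw [harith]
  -- final combination
  have hfinal : |(c ((Ψ * Pmat H dx du M) *ᵥ v + w (t - 1))
        (∑ h ∈ Finset.Icc 1 H, (M h) *ᵥ (w (t - h)))
      - α * entryMax (Vinvsqrt * Pmat H dx du M * Ssqrt))
      - (c ((Ψ * Pmat H dx du M') *ᵥ v + w (t - 1))
        (∑ h ∈ Finset.Icc 1 H, (M' h) *ᵥ (w (t - h)))
      - α * entryMax (Vinvsqrt * Pmat H dx du M' * Ssqrt))|
      ≤ (Real.sqrt 2 * W * (H:ℝ) * F + α / (RM * Real.sqrt (2 * (H:ℝ)))) * Real.sqrt S := by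
    have e0 : (c ((Ψ * Pmat H dx du M) *ᵥ v + w (t - 1))
          (∑ h ∈ Finset.Icc 1 H, (M h) *ᵥ (w (t - h)))
        - α * entryMax (Vinvsqrt * Pmat H dx du M * Ssqrt))
        - (c ((Ψ * Pmat H dx du M') *ᵥ v + w (t - 1))
          (∑ h ∈ Finset.Icc 1 H, (M' h) *ᵥ (w (t - h)))
        - α * entryMax (Vinvsqrt * Pmat H dx du M' * Ssqrt))
        = (c ((Ψ * Pmat H dx du M) *ᵥ v + w (t - 1))
            (∑ h ∈ Finset.Icc 1 H, (M h) *ᵥ (w (t - h)))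
          - c ((Ψ * Pmat H dx du M') *ᵥ v + w (t - 1))
            (∑ h ∈ Finset.Icc 1 H, (M' h) *ᵥ (w (t - h))))
          - α * (entryMax (Vinvsqrt * Pmat H dx du M * Ssqrt)
            - entryMax (Vinvsqrt * Pmat H dx du M' * Ssqrt)) := by ring
    rw [e0]
    refine (abs_sub_le_abs_add_abs _ _).trans ?_
    rw [abs_mul, abs_of_nonneg hα]
    calc _ ≤ (Real.sqrt 2 * W * (H:ℝ) * F * Real.sqrt S)
        + α * (Real.sqrt S / (RM * Real.sqrt (2 * (H:ℝ)))) :=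
          add_le_add hcterm (mul_le_mul_of_nonneg_left halpha hα)
    _ = (Real.sqrt 2 * W * (H:ℝ) * F + α / (RM * Real.sqrt (2 * (H:ℝ)))) * Real.sqrt S := by
          ring
  have hcast : ((2 * H : ℕ) : ℝ) = 2 * (H:ℝ) := by push_cast; ring
  exact hfinal
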